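/- arXiv:1605.02510 — 5 statements merged into one kernel-verified Lean document; each statement's English description precedes it below -/
import Mathlib

section
/- For all u in the open interval (0,1), the spline function φ1(u) = u^4 - (43/96)u^3 - (69/32)(u - 1/3)_+^3 + (21/32)(u - 2/3)_+^3 satisfies φ1(u) ≤ 0, where x_+ = max(x,0). -/
theorem stmt1 (u : ℝ) (hu : u ∈ Set.Ioo (0:ℝ) 1) :
    u^4 - (43/96)*u^3 - (69/32)*(max (u - 1/3) 0)^3 + (21/32)*(max (u - 2/3) 0)^3 ≤ 0 := by
  obtain ⟨h0, h1⟩ := hu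
  rcases le_or_gt u (1/3) with h | h
  · rw [max_eq_right (by linarith), max_eq_right (by linarith)]
    nlinarith [pow_pos h0 3, sq_nonneg u]
  · rcases le_or_gt u (2/3) with h2 | h2
    · rw [max_eq_left (by linarith), max_eq_right (by linarith)]
      nlinarith [mul_nonneg (by linarith : (0:ℝ) ≤ u - 1/3) (by linarith : (0:ℝ) ≤ 2/3 - u),
        sq_nonneg (u - 1/3), sq_nonneg (u - 2/3), sq_nonneg (u - 1/2), sq_nonneg u,
        mul_nonneg (mul_nonneg (by linarith : (0:ℝ) ≤ u - 1/3) (by linarith : (0:ℝ) ≤ 2/3 - u)) (by linarith : (0:ℝ) ≤ u - 1/3),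
        mul_nonneg (mul_nonneg (by linarith : (0:ℝ) ≤ u - 1/3) (by linarith : (0:ℝ) ≤ 2/3 - u)) (by linarith : (0:ℝ) ≤ 2/3 - u)]
    · rw [max_eq_left (by linarith), max_eq_left (by linarith)]
      nlinarith [mul_nonneg (by linarith : (0:ℝ) ≤ u - 2/3) (by linarith : (0:ℝ) ≤ 1 - u),
        sq_nonneg (u - 2/3), sq_nonneg (u - 1), sq_nonneg u,
        mul_nonneg (mul_nonneg (by linarith : (0:ℝ) ≤ u - 2/3) (by linarith : (0:ℝ) ≤ 1 - u)) (by linarith : (0:ℝ) ≤ u - 2/3),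
        mul_nonneg (mul_nonneg (by linarith : (0:ℝ) ≤ u - 2/3) (by linarith : (0:ℝ) ≤ 1 - u)) (by linarith : (0:ℝ) ≤ 1 - u)]
end

section
/- For all u in the open interval (0,2), the spline function φ2(u) = u^4 - (43/48)u^3 - (29/18)(u - 1/2)_+^3 - (83/24)(u - 1)_+^3 satisfies φ2(u) < 0. -/
theorem stmt3 (u : ℝ) (hu : u ∈ Set.Ioo (0:ℝ) 2) :
    u^4 - (43/48)*u^3 - (29/18)*(max (u - 1/2) 0)^3 - (83/24)*(max (u - 1) 0)^3 < 0 := by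
  obtain ⟨h0, h2⟩ := hu
  rcases le_or_gt u (1/2) with hA | hA
  · rw [max_eq_right (by linarith), max_eq_right (by linarith)]
    nlinarith [pow_pos h0 3]
  · rw [max_eq_left (by linarith)]
    rcases le_or_gt u 1 with hB | hB
    · rw [max_eq_right (by linarith)]
      nlinarith [mul_nonneg (mul_nonneg (le_of_lt (by linarith : (0:ℝ) < u - 1/2)) (by linarith : (0:ℝ) ≤ 1 - u)) (le_of_lt h0), sq_nonneg (u - 1/2), sq_nonneg (u - 1), sq_nonneg (u - 3/4), mul_pos h0 h0]
    · rw [max_eq_left (by linarith)]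
      nlinarith [sq_nonneg (u - 1), sq_nonneg (u - 2), sq_nonneg (2*u - 3), mul_pos (sub_pos.2 hB) (sub_pos.2 h2)]
end

section
/- For all u in the open interval (0,1), the spline function φ3(u) = u^4 - (13/18)u^3 - 2(u - 1/2)_+^3 - (16/9)(u - 3/4)_+^3 satisfies φ3(u) ≤ 0. -/
theorem stmt4 (u : ℝ) (hu : u ∈ Set.Ioo (0:ℝ) 1) :
    u^4 - (13/18)*u^3 - 2*(max (u - 1/2) 0)^3 - (16/9)*(max (u - 3/4) 0)^3 ≤ 0 := by
  obtain ⟨h0, h1⟩ := hu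
  rcases le_or_gt u (1/2) with h | h
  · rw [max_eq_right (by linarith), max_eq_right (by linarith)]
    nlinarith [pow_nonneg h0.le 3, pow_nonneg h0.le 2]
  rcases le_or_gt u (3/4) with h' | h'
  · rw [max_eq_left (by linarith), max_eq_right (by linarith)]
    nlinarith [sq_nonneg (u - 1/2), sq_nonneg (u - 3/4), mul_nonneg (by linarith : (0:ℝ) ≤ u - 1/2) (by linarith : (0:ℝ) ≤ 3/4 - u), sq_nonneg (u - 5/8), mul_nonneg (mul_nonneg (by linarith : (0:ℝ) ≤ u - 1/2) (by linarith : (0:ℝ) ≤ 3/4 - u)) h0.le]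
  · rw [max_eq_left (by linarith), max_eq_left (by linarith)]
    nlinarith [sq_nonneg (u - 1), sq_nonneg (u - 3/4), mul_pos (sub_pos.2 h') (sub_pos.2 h1)]
end

section
/- For all u in the open interval (0,1/2), the spline function ψ(u) = u^4 + (5/3)u^3 - 6(u - 1/6)_+^3 + 3(u - 1/6)_+^3 (i.e. u^4 + (5/3)u^3 - 3(u - 1/6)_+^3) satisfies ψ(u) ≥ 0. -/
theorem stmt6 (u : ℝ) (hu : u ∈ Set.Ioo (0:ℝ) (1/2)) :
    u^4 + (5/3)*u^3 - 6*(max (u - 1/6) 0)^3 + 3*(max (u - 1/6) 0)^3 ≥ 0 := by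
  obtain ⟨h1, h2⟩ := hu
  rcases le_or_gt (u - 1/6) 0 with h | h
  · rw [max_eq_right h]
    nlinarith [pow_pos h1 3, pow_pos h1 4]
  · rw [max_eq_left h.le]
    nlinarith [sq_nonneg (u - 1/6), sq_nonneg u, sq_nonneg (u - 1/2), mul_pos h1 h1]
end

section
/- The expression (u^2/96)·((1-2u)^2 - (3-4u)c) is nonpositive for all u in [0,1/2] if and only if c ≥ 1/3. -/
theorem stmt17 (c : ℝ) :
    (∀ u ∈ Set.Icc (0:ℝ) (1/2), (u^2/96) * ((1-2*u)^2 - (3-4*u)*c) ≤ 0) ↔ c ≥ 1/3 := by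
  constructor
  · intro h
    by_contra hc
    push_neg at hc
    rcases le_total (1/2 : ℝ) (1/3 - c) with hm | hm
    · have := h (1/2) ⟨by norm_num, le_refl _⟩
      nlinarith
    · have := h (1/3 - c) ⟨by linarith, hm⟩
      have he : (0:ℝ) < 1/3 - c := by linarith
      nlinarith [mul_pos (mul_pos he he) he]
  · intro hc u hu
    obtain ⟨h0, h1⟩ := hu
    have h2 : (0:ℝ) ≤ 3 - 4*u := by linarith
    nlinarith [sq_nonneg u, mul_nonneg (mul_nonneg (sq_nonneg u) h2) (by linarith : (0:ℝ) ≤ c - 1/3), mul_nonneg (mul_nonneg (sq_nonneg u) h0) (by linarith : (0:ℝ) ≤ 2 - 3*u)]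
end
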